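/- Let x, y ∈ Σ_q^n be distinct and suppose I_1(x) ∩ I_1(y) contains two distinct elements z and z'. Then for any t ≥ 1, |I_t(x) ∩ I_t(y)| ≥ 2·I_q(n+1, t−1) − |I_{t−1}(z) ∩ I_{t−1}(z')|, where I_q(n+1, t−1) is the common size of a (t−1)-insertion ball of a sequence of length n+1. -/
import Mathlib

/-- The t-insertion ball: length-(|x|+t) supersequences of x. -/
def iBall {α : Type*} (t : ℕ) (x : List α) : Set (List α) :=
  {z | x.Sublist z ∧ z.length = x.length + t}

/-- I_q(n,t), the size of the t-insertion ball of a q-ary sequence of length n. -/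
def Iq (q n t : ℕ) : ℕ :=
  ∑ i ∈ Finset.range (t + 1), Nat.choose (n + t) i * (q - 1) ^ i

lemma iBall_finite {α : Type*} [Finite α] (t : ℕ) (x : List α) : (iBall t x).Finite :=
  (List.finite_length_eq α (x.length + t)).subset fun _ h => h.2

lemma iBall_zero {α : Type*} (x : List α) : iBall 0 x = {x} := by
  ext w
  simp only [iBall, Set.mem_setOf_eq, Set.mem_singleton_iff]
  constructor
  · rintro ⟨h1, h2⟩
    exact (h1.eq_of_length (by omega)).symm
  · rintro rfl; exact ⟨List.Sublist.refl _, by omega⟩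

lemma iBall_succ_nil {α : Type*} (s : ℕ) :
    iBall (s+1) ([] : List α) = ⋃ b, (fun w => b :: w) '' iBall s [] := by
  ext w
  simp only [iBall, Set.mem_setOf_eq, Set.mem_iUnion, Set.mem_image, List.length_nil]
  constructor
  · rintro ⟨-, h2⟩
    match w with
    | b :: w' => exact ⟨b, w', ⟨List.nil_sublist _, by simpa using h2⟩, rfl⟩
  · rintro ⟨b, w', ⟨-, h2⟩, rfl⟩
    exact ⟨List.nil_sublist _, by simp [h2]⟩

lemma iBall_succ_cons {α : Type*} [DecidableEq α] (s : ℕ) (a : α) (z : List α) :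
    iBall (s+1) (a :: z) =
      ⋃ b, (fun w => b :: w) '' (if b = a then iBall (s+1) z else iBall s (a :: z)) := by
  ext w
  simp only [iBall, Set.mem_setOf_eq, Set.mem_iUnion, Set.mem_image, List.length_cons]
  constructor
  · rintro ⟨h1, h2⟩
    match w with
    | b :: w' =>
      by_cases hba : b = a
      · subst hba
        refine ⟨b, w', ?_, rfl⟩
        rw [if_pos rfl]
        exact ⟨List.cons_sublist_cons.mp h1, by simp at h2 ⊢; omega⟩
      · refine ⟨b, w', ?_, rfl⟩
        rw [if_neg hba]
        rcases List.cons_sublist_cons'.mp h1 with h | ⟨hab, -⟩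
        · exact ⟨h, by simp at h2 ⊢; omega⟩
        · exact absurd hab.symm hba
  · rintro ⟨b, w', hw', rfl⟩
    by_cases hba : b = a
    · subst hba
      rw [if_pos rfl] at hw'
      exact ⟨List.cons_sublist_cons.mpr hw'.1, by simp [hw'.2]; omega⟩
    · rw [if_neg hba] at hw'
      exact ⟨hw'.1.cons _, by simp [hw'.2]; omega⟩

lemma ncard_cons_iUnion {α : Type*} [Fintype α] [DecidableEq α] (T : α → Set (List α))
    (hT : ∀ b, (T b).Finite) :
    (⋃ b, (fun w => b :: w) '' T b).ncard = ∑ b, (T b).ncard := by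
  classical
  have heq : (⋃ b, (fun w => b :: w) '' T b) =
      ↑(Finset.univ.biUnion fun b => (hT b).toFinset.image (b :: ·)) := by
    ext w
    simp [Set.Finite.mem_toFinset]
  rw [heq, Set.ncard_coe_finset, Finset.card_biUnion]
  · refine Finset.sum_congr rfl fun b _ => ?_
    rw [Finset.card_image_of_injective _ List.cons_injective,
      ← Set.ncard_eq_toFinset_card _ (hT b)]
  · intro b _ b' _ hbb'
    simp only [Finset.disjoint_left, Finset.mem_image, Set.Finite.mem_toFinset]
    rintro w ⟨u, -, rfl⟩ ⟨v, -, hv⟩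
    exact hbb' ((List.cons.injEq _ _ _ _).mp hv.symm).1

lemma Iq_zero_right (q m : ℕ) : Iq q m 0 = 1 := by simp [Iq]

lemma Iq_zero_left (q s : ℕ) (hq : 1 ≤ q) : Iq q 0 s = q ^ s := by
  have h : q = (q - 1) + 1 := by omega
  conv_rhs => rw [h]
  rw [add_pow]
  unfold Iq
  push_cast
  refine Finset.sum_congr rfl fun i hi => ?_
  simp [one_pow]
  ring

lemma Iq_rec (q m s : ℕ) : Iq q (m + 1) (s + 1) = Iq q m (s + 1) + (q - 1) * Iq q (m + 1) s := by
  have e1 : m + 1 + (s + 1) = m + s + 1 + 1 := by omega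
  have e2 : m + (s + 1) = m + s + 1 := by omega
  have e3 : m + 1 + s = m + s + 1 := by omega
  unfold Iq
  rw [e1, e2, e3]
  rw [Finset.sum_range_succ' (fun i => Nat.choose (m+s+1+1) i * (q - 1) ^ i)]
  have h1 : ∀ i ∈ Finset.range (s+1), Nat.choose (m+s+1+1) (i+1) * (q-1)^(i+1)
      = Nat.choose (m+s+1) (i+1) * (q-1)^(i+1) + (q-1) * (Nat.choose (m+s+1) i * (q-1)^i) := by
    intro i _
    rw [Nat.choose_succ_succ']
    ring
  rw [Finset.sum_congr rfl h1, Finset.sum_add_distrib, ← Finset.mul_sum]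
  conv_rhs => rw [Finset.sum_range_succ' (fun i => Nat.choose (m+s+1) i * (q - 1) ^ i) (s+1)]
  simp only [Nat.choose_zero_right, pow_zero, mul_one, one_mul]
  omega

lemma ball_ncard (q : ℕ) (hq : 1 ≤ q) : ∀ (s : ℕ) (z : List (Fin q)),
    (iBall s z).ncard = Iq q z.length s := by
  intro s
  induction s with
  | zero => intro z; rw [iBall_zero, Iq_zero_right]; simp
  | succ s ih =>
    intro z
    induction z with
    | nil =>
      rw [iBall_succ_nil, ncard_cons_iUnion _ (fun _ => iBall_finite _ _)]
      simp only [ih, List.length_nil, Finset.sum_const, Finset.card_univ, Fintype.card_fin,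
        smul_eq_mul]
      rw [Iq_zero_left _ _ hq, Iq_zero_left _ _ hq, pow_succ]
      ring
    | cons a z0 ihz =>
      rw [iBall_succ_cons, ncard_cons_iUnion _ (fun b => by split <;> exact iBall_finite _ _)]
      have hval : ∀ b : Fin q, ((if b = a then iBall (s+1) z0 else iBall s (a :: z0))).ncard
          = if b = a then Iq q z0.length (s+1) else Iq q (z0.length + 1) s := by
        intro b; split
        · exact ihz
        · rw [ih]; rfl
      simp only [hval]
      rw [Finset.sum_ite, Finset.sum_const, Finset.sum_const]
      have hc1 : (Finset.univ.filter (fun b : Fin q => b = a)).card = 1 := by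
        simp [Finset.filter_eq']
      have hc2 : (Finset.univ.filter (fun b : Fin q => ¬ b = a)).card = q - 1 := by
        rw [Finset.filter_not, Finset.card_sdiff_of_subset (Finset.filter_subset _ _)]
        simp [hc1]
      rw [hc1, hc2]
      simp only [one_smul, smul_eq_mul, one_mul, List.length_cons]
      exact (Iq_rec q z0.length s).symm

theorem stmt_16 (q n t : ℕ) (ht : 1 ≤ t) (x y z z' : List (Fin q))
    (hx : x.length = n) (hy : y.length = n) (hxy : x ≠ y)
    (hz : z ∈ iBall 1 x ∩ iBall 1 y) (hz' : z' ∈ iBall 1 x ∩ iBall 1 y)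
    (hzz' : z ≠ z') :
    2 * Iq q (n + 1) (t - 1) - (iBall (t - 1) z ∩ iBall (t - 1) z').ncard ≤
      (iBall t x ∩ iBall t y).ncard := by
  have hq : 1 ≤ q := by
    by_contra h
    have hq0 : q = 0 := by omega
    subst hq0
    have hnil : ∀ l : List (Fin 0), l = [] := fun l => match l with
      | [] => rfl
      | a :: _ => a.elim0
    exact hzz' ((hnil z).trans (hnil z').symm)
  obtain ⟨⟨hzx, hzxl⟩, ⟨hzy, hzyl⟩⟩ := hz
  obtain ⟨⟨hz'x, hz'xl⟩, ⟨hz'y, hz'yl⟩⟩ := hz'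
  have hzl : z.length = n + 1 := by rw [hzxl, hx]
  have hz'l : z'.length = n + 1 := by rw [hz'xl, hx]
  have hsub : iBall (t-1) z ∪ iBall (t-1) z' ⊆ iBall t x ∩ iBall t y := by
    refine Set.union_subset ?_ ?_ <;> rintro w ⟨hw1, hw2⟩
    · exact ⟨⟨hzx.trans hw1, by omega⟩, ⟨hzy.trans hw1, by omega⟩⟩
    · exact ⟨⟨hz'x.trans hw1, by omega⟩, ⟨hz'y.trans hw1, by omega⟩⟩
  have hA : (iBall (t-1) z).ncard = Iq q (n+1) (t-1) := by
    rw [ball_ncard q hq, hzl]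
  have hB : (iBall (t-1) z').ncard = Iq q (n+1) (t-1) := by
    rw [ball_ncard q hq, hz'l]
  have hineq : (iBall (t-1) z ∪ iBall (t-1) z').ncard ≤ (iBall t x ∩ iBall t y).ncard :=
    Set.ncard_le_ncard hsub ((iBall_finite t x).inter_of_left _)
  have hkey := Set.ncard_union_add_ncard_inter (iBall (t-1) z) (iBall (t-1) z')
    (iBall_finite _ _) (iBall_finite _ _)
  omega
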